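/- arXiv:2012.01391 — 6 statements merged into one kernel-verified Lean document; each statement's English description precedes it below -/
import Mathlib

section
/- Let p be an odd prime, let P be a polynomial over F_p = ZMod p in variables x_1,…,x_k, let l_1,…,l_k be positive integers, and let 1 ≤ i ≤ k. Then the coefficient of the monomial x_1^{l_1·p−1}⋯x_k^{l_k·p−1} in the partial derivative ∂P/∂x_i is 0; equivalently, the F_p-integral of ∂P/∂x_i over the p-cycle [l_1,…,l_k]_p vanishes. -/
/-- The `𝔽_p`-integral of a partial derivative vanishes: the coefficient of the
monomial `x₁^(l₁·p−1) ⋯ x_k^(l_k·p−1)` in `∂P/∂xᵢ` is zero. -/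
theorem fp_integral_of_pderiv_eq_zero (p : ℕ) (hp : p.Prime) (hodd : Odd p)
    (k : ℕ) (P : MvPolynomial (Fin k) (ZMod p)) (l : Fin k → ℕ)
    (hl : ∀ j, 0 < l j) (i : Fin k) :
    MvPolynomial.coeff (∑ j : Fin k, Finsupp.single j (l j * p - 1))
      (MvPolynomial.pderiv i P) = 0 := by
  classical
  have hppos : 0 < p := hp.pos
  have hmi : (∑ j : Fin k, Finsupp.single j (l j * p - 1)) i = l i * p - 1 := by
    rw [Finset.sum_apply',
      Finset.sum_eq_single i (fun b _ hb => Finsupp.single_eq_of_ne' hb) (by simp)]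
    exact Finsupp.single_eq_same
  rw [show P = ∑ s ∈ P.support, MvPolynomial.monomial s (MvPolynomial.coeff s P) from
    (MvPolynomial.support_sum_monomial_coeff P).symm]
  rw [map_sum, MvPolynomial.coeff_sum]
  apply Finset.sum_eq_zero
  intro s hs
  rw [MvPolynomial.pderiv_monomial, MvPolynomial.coeff_monomial]
  split_ifs with h
  · rcases Nat.eq_zero_or_pos (s i) with h0 | h0
    · simp [h0]
    · have hsi : s i = l i * p := by
        have h' : s i - 1 = l i * p - 1 := by
          have h2 := congrArg (fun f => f i) h
          simp only [Finsupp.tsub_apply, Finsupp.single_eq_same, hmi] at h2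
          exact h2
        have hlp : 1 ≤ l i * p := Nat.one_le_iff_ne_zero.mpr
          (Nat.mul_ne_zero (hl i).ne' hppos.ne')
        omega
      rw [hsi]
      simp [Nat.cast_mul, ZMod.natCast_self]
  · simp
end

section
/- F_p-beta integral formula: let p be an odd prime and let a, b be nonnegative integers with a < p and b < p. If p − 1 ≤ a + b, then the coefficient of x^{p−1} in the polynomial x^a(1−x)^b over F_p equals −a!·b!/((a+b+1−p)!) (note 0 ≤ a+b+1−p ≤ p−1, so the inverted factorial is nonzero in F_p). If instead a + b < p − 1, then the coefficient of x^{p−1} in x^a(1−x)^b is 0. -/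
open Polynomial

lemma fact_mul_fact_aux (p : ℕ) (hp : p.Prime) :
    ∀ a, a < p → ((a.factorial : ZMod p) * ((p - 1 - a).factorial : ZMod p) = (-1) ^ (a + 1))
  | 0, _ => by
    haveI := Fact.mk hp
    simp [ZMod.wilsons_lemma]
  | (a+1), h => by
    have ih := fact_mul_fact_aux p hp a (lt_of_le_of_lt (Nat.le_succ a) h)
    have h2 : p - 1 - a = (p - 1 - (a + 1)) + 1 := by omega
    have hcast : ((p - 1 - a : ℕ) : ZMod p) = -((a : ZMod p) + 1) := by
      have he : (p - 1 - a : ℕ) = p - (a + 1) := by omega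
      rw [he, Nat.cast_sub (by omega)]
      push_cast
      simp [ZMod.natCast_self]
    rw [h2, Nat.factorial_succ, ← h2] at ih
    push_cast at ih
    rw [hcast] at ih
    rw [Nat.factorial_succ]
    push_cast
    linear_combination -ih

lemma one_sub_X_pow_coeff {R : Type*} [CommRing R] (b k : ℕ) :
    ((1 - X : R[X]) ^ b).coeff k = (-1) ^ k * (b.choose k : R) := by
  have h : (1 - X : R[X]) = -(X + C (-1)) := by simp [map_neg]; ring
  rw [h, neg_pow, ← C_1, ← C_neg, ← C_pow, coeff_C_mul, coeff_X_add_C_pow]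
  rcases le_or_gt k b with hkb | hkb
  · have hpow : (-1 : R) ^ b * (-1) ^ (b - k) = (-1) ^ k := by
      rw [← pow_add, show b + (b - k) = 2 * (b - k) + k by omega, pow_add, pow_mul]
      simp
    linear_combination (b.choose k : R) * hpow
  · simp [Nat.choose_eq_zero_of_lt hkb]

/-- **The `𝔽_p`-beta integral formula.** For an odd prime `p` and nonnegative
integers `a, b < p`, the coefficient of `x^(p−1)` in `x^a (1−x)^b` over `ZMod p`
equals `-(a! b! / (a+b+1−p)!)` when `p − 1 ≤ a + b`, and equals `0` when
`a + b < p − 1`. -/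
theorem fp_beta_integral (p : ℕ) (hp : p.Prime) (hodd : Odd p)
    (a b : ℕ) (ha : a < p) (hb : b < p) :
    ((p - 1 ≤ a + b →
      (Polynomial.X ^ a * (1 - Polynomial.X) ^ b : Polynomial (ZMod p)).coeff (p - 1)
        = -((a.factorial : ZMod p) * (b.factorial : ZMod p)
            * ((((a + b + 1 - p).factorial : ZMod p))⁻¹)))
    ∧ (a + b < p - 1 →
      (Polynomial.X ^ a * (1 - Polynomial.X) ^ b : Polynomial (ZMod p)).coeff (p - 1)
        = 0)) := by
  haveI := Fact.mk hp
  have hp1 : 1 ≤ p := hp.one_lt.le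
  set k := p - 1 - a with hk
  have hpk : p - 1 = k + a := by omega
  have hco : (X ^ a * (1 - X) ^ b : Polynomial (ZMod p)).coeff (p - 1)
      = ((1 - X : Polynomial (ZMod p)) ^ b).coeff k := by
    rw [hpk, Polynomial.coeff_X_pow_mul]
  rw [hco, one_sub_X_pow_coeff]
  constructor
  · intro hab
    have hkb : k ≤ b := by omega
    set c := a + b + 1 - p with hc
    have hbkc : b - k = c := by omega
    have hchoose : (b.choose k : ZMod p) * (k.factorial : ZMod p) * (c.factorial : ZMod p)
        = (b.factorial : ZMod p) := by
      rw [← hbkc]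
      exact_mod_cast congrArg (Nat.cast : ℕ → ZMod p)
        (Nat.choose_mul_factorial_mul_factorial hkb)
    have hK : (k.factorial : ZMod p) ≠ 0 := by
      rw [Ne, ZMod.natCast_eq_zero_iff, hp.dvd_factorial]
      omega
    have hC : (c.factorial : ZMod p) ≠ 0 := by
      rw [Ne, ZMod.natCast_eq_zero_iff, hp.dvd_factorial]
      omega
    have haux := fact_mul_fact_aux p hp a ha
    rw [← hk] at haux
    have hpar : ((-1 : ZMod p)) ^ k * (-1) ^ a = 1 := by
      rw [← pow_add]
      have : k + a = p - 1 := hpk.symm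
      rw [this]
      exact (Nat.Odd.sub_odd hodd odd_one).neg_one_pow
    have key : ((-1 : ZMod p)) ^ k * (-1) ^ (a + 1) = -1 := by
      rw [pow_succ]
      rw [← mul_assoc, hpar, one_mul]
    have hu : ((-1 : ZMod p)) ^ a * (-1) ^ a = 1 := by
      rw [← pow_add]; exact Even.neg_one_pow ⟨a, rfl⟩
    have h1 : ((-1 : ZMod p)) ^ k = (-1) ^ a :=
      calc ((-1 : ZMod p)) ^ k = (-1) ^ k * ((-1) ^ a * (-1) ^ a) := by rw [hu, mul_one]
        _ = ((-1) ^ k * (-1) ^ a) * (-1) ^ a := by ring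
        _ = (-1) ^ a := by rw [hpar, one_mul]
    field_simp
    rw [h1]
    apply mul_right_cancel₀ hK
    linear_combination ((-1 : ZMod p)) ^ a * hchoose + (b.factorial : ZMod p) * haux
  · intro hab
    have : b < k := by omega
    rw [Nat.choose_eq_zero_of_lt this]
    simp
end

section
/- Simplest A_2-type F_p-Selberg formula (k_1 = k_2 = 1): let p be an odd prime and let a, b_1, b_2, c be integers with 0 ≤ a < p, b_1 ≥ 0, 0 < c ≤ p, 0 ≤ b_2 < p, 0 ≤ b_2 − c + 1 < p, 0 ≤ b_1 + b_2 − c + 1 < p, and p − 1 ≤ a + b_1 + b_2 − c + 1 < 2p − 1. Then in F_p the coefficient of t^{p−1}s^{p−1} in the polynomial t^a(1−t)^{b_1}(s−t)^{p−c}(1−s)^{b_2} equals a!·(b_1+b_2−c+1)!·(p−c)!·b_2! divided by (a+b_1+b_2−c+2−p)!·(b_2−c+1)!. -/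
open MvPolynomial Finset

/-- The factorial of an integer (assumed to lie in `[0, p-1]`), taken in `ZMod p`. -/
noncomputable def zfact (p : ℕ) (x : ℤ) : ZMod p := ((x.toNat).factorial : ZMod p)

lemma zfact_eq {p : ℕ} (x : ℤ) (n : ℕ) (h : x.toNat = n) :
    zfact p x = (n.factorial : ZMod p) := by rw [zfact, h]

lemma fact_ne_zero {p : ℕ} (hp : p.Prime) {k : ℕ} (hk : k < p) :
    ((k.factorial : ZMod p)) ≠ 0 := by
  haveI : Fact p.Prime := ⟨hp⟩
  rw [Ne, ZMod.natCast_eq_zero_iff]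
  intro h
  exact absurd ((Nat.Prime.dvd_factorial hp).mp h) (by omega)

lemma wilson_pair {p : ℕ} (hp : p.Prime) {a : ℕ} (ha : a ≤ p - 1) :
    ((a.factorial : ZMod p) * ((p - 1 - a).factorial : ZMod p)) = (-1) ^ (a + 1) := by
  haveI : Fact p.Prime := ⟨hp⟩
  induction a with
  | zero => simpa using ZMod.wilsons_lemma p
  | succ a ih =>
    have hp2 : 2 ≤ p := hp.two_le
    have h1 : (p - 1 - a) = (p - 1 - (a+1)) + 1 := by omega
    have ih' := ih (by omega)
    rw [h1, Nat.factorial_succ] at ih'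
    push_cast at ih'
    have key : ((a : ZMod p) + 1) + (((p - 1 - (a+1) : ℕ) : ZMod p) + 1) = 0 := by
      have he : (a + 1) + ((p - 1 - (a+1)) + 1) = p := by omega
      have := congrArg (fun n : ℕ => (n : ZMod p)) he
      push_cast at this
      rw [ZMod.natCast_self] at this
      linear_combination this
    rw [Nat.factorial_succ]
    push_cast
    linear_combination -ih' + ((a.factorial : ZMod p) * ((p - 1 - (a+1)).factorial : ZMod p)) * key

lemma coeff_gen {R : Type*} [CommRing R] (n : ℕ) (r : R) (u v : ℕ) :
    coeff (Finsupp.single (0:Fin 2) n + Finsupp.single 1 n) (C r * X 0 ^ u * X 1 ^ v) =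
      if u = n ∧ v = n then r else 0 := by
  rw [X_pow_eq_monomial, X_pow_eq_monomial, mul_assoc, monomial_mul, C_mul_monomial, mul_one,
    mul_one, coeff_monomial]
  congr 1
  simp only [eq_iff_iff]
  constructor
  · intro h
    have h0 := DFunLike.congr_fun h 0
    have h1 := DFunLike.congr_fun h 1
    simp [Finsupp.single_apply] at h0 h1
    exact ⟨h0, h1⟩
  · rintro ⟨rfl, rfl⟩; rfl

lemma base_coeff {p : ℕ} (B b₂ a : ℕ) :
    coeff (Finsupp.single (0:Fin 2) (p-1) + Finsupp.single 1 (p-1))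
      ((X 0) ^ a * (X 1 - X 0) ^ B * (1 - X 1) ^ b₂ : MvPolynomial (Fin 2) (ZMod p))
    = ∑ i ∈ range (b₂+1), ∑ j ∈ range (B+1),
        if a + (B - j) = p-1 ∧ j + (b₂ - i) = p-1 then
          ((-1)^(j + B + (i + b₂)) * (B.choose j) * (b₂.choose i) : ZMod p) else 0 := by
  rw [sub_pow, sub_pow]
  rw [Finset.mul_sum, coeff_sum]
  refine Finset.sum_congr rfl fun i hi => ?_
  rw [Finset.mul_sum, Finset.sum_mul, coeff_sum]
  refine Finset.sum_congr rfl fun j hj => ?_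
  have : (X 0 ^ a * ((-1) ^ (j + B) * X 1 ^ j * X 0 ^ (B - j) * (B.choose j : MvPolynomial (Fin 2) (ZMod p))) *
      ((-1) ^ (i + b₂) * (1:MvPolynomial (Fin 2) (ZMod p)) ^ i * X 1 ^ (b₂ - i) * (b₂.choose i : MvPolynomial (Fin 2) (ZMod p))))
      = C (((-1)^(j + B + (i + b₂)) * (B.choose j) * (b₂.choose i) : ZMod p)) * X 0 ^ (a + (B - j)) * X 1 ^ (j + (b₂ - i)) := by
    simp only [map_mul, map_pow, map_neg, map_one, map_natCast]
    ring
  rw [this, coeff_gen]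

/-- The base case `b₁ = 0`. -/
lemma base_case {p : ℕ} (hp : p.Prime) (hodd : Odd p)
    (a b₂ c : ℕ) (ha : a < p) (hc : 0 < c) (hcp : c ≤ p) (hb₂ : b₂ < p)
    (h1 : c ≤ b₂ + 1) (h1' : b₂ + 1 - c < p)
    (h3 : p - 1 ≤ a + b₂ + 1 - c) (h3l : c + p ≤ a + b₂ + 2)
    (h3' : a + b₂ + 2 - c - p < p) :
    coeff (Finsupp.single (0:Fin 2) (p-1) + Finsupp.single 1 (p-1))
      ((X 0) ^ a * (X 1 - X 0) ^ (p - c) * (1 - X 1) ^ b₂ : MvPolynomial (Fin 2) (ZMod p))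
    = (a.factorial : ZMod p) * ((b₂ + 1 - c).factorial : ZMod p)
        * (((a + b₂ + 2 - c - p).factorial : ZMod p))⁻¹
        * (((p - c).factorial : ZMod p) * (b₂.factorial : ZMod p)
            * (((b₂ + 1 - c).factorial : ZMod p))⁻¹) := by
  haveI : Fact p.Prime := ⟨hp⟩
  have hp3 : 3 ≤ p := by
    rcases hp.two_le.lt_or_eq with h | h
    · omega
    · exact absurd hodd (by rw [← h]; decide)
  have hca : c ≤ a + 1 := by omega
  set j₀ := a + 1 - c with hj₀
  set i₀ := a + b₂ + 2 - c - p with hi₀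
  rw [base_coeff]
  rw [Finset.sum_eq_single i₀]
  rotate_left
  · intro i hi hne
    refine Finset.sum_eq_zero fun j hj => ?_
    rw [if_neg]
    rw [mem_range] at hi hj
    omega
  · intro h
    exact absurd (mem_range.mpr (by omega)) h
  rw [Finset.sum_eq_single j₀]
  rotate_left
  · intro j hj hne
    rw [if_neg]
    rw [mem_range] at hj
    omega
  · intro h
    exact absurd (mem_range.mpr (by omega)) h
  rw [if_pos (by omega)]
  -- now the factorial identity
  have n3 : ((i₀.factorial : ZMod p)) ≠ 0 := fact_ne_zero hp (by omega)
  have n5 : (((b₂ + 1 - c).factorial : ZMod p)) ≠ 0 := fact_ne_zero hp (by omega)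
  have e1 : (((p-c).choose j₀ : ZMod p)) * (j₀.factorial : ZMod p)
      * (((p-1-a).factorial : ZMod p)) = (((p-c).factorial : ZMod p)) := by
    have h := Nat.choose_mul_factorial_mul_factorial (show j₀ ≤ p - c by omega)
    rw [show p - c - j₀ = p - 1 - a by omega] at h
    exact_mod_cast congrArg (fun n : ℕ => (n : ZMod p)) h
  have e2 : ((b₂.choose i₀ : ZMod p)) * (i₀.factorial : ZMod p)
      * (((p+c-2-a).factorial : ZMod p)) = ((b₂.factorial : ZMod p)) := by
    have h := Nat.choose_mul_factorial_mul_factorial (show i₀ ≤ b₂ by omega)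
    rw [show b₂ - i₀ = p + c - 2 - a by omega] at h
    exact_mod_cast congrArg (fun n : ℕ => (n : ZMod p)) h
  have w1 : ((a.factorial : ZMod p)) * (((p-1-a).factorial : ZMod p)) = (-1) ^ (a+1) :=
    wilson_pair hp (by omega)
  have w2 : ((j₀.factorial : ZMod p)) * (((p+c-2-a).factorial : ZMod p)) = (-1) ^ (j₀+1) := by
    have h := wilson_pair (p := p) hp (show j₀ ≤ p - 1 by omega)
    rwa [show p - 1 - j₀ = p + c - 2 - a by omega] at h
  have hpar : (j₀ + (p-c) + (i₀ + b₂)) + ((a+1) + (j₀+1)) = 2 * (2*a + b₂ + 3 - 2*c) := by omega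
  have sq : ((-1 : ZMod p)) ^ ((a+1) + (j₀+1)) * (-1) ^ ((a+1) + (j₀+1)) = 1 := by
    rw [← pow_add, ← two_mul, pow_mul]; norm_num
  have hone : ((-1 : ZMod p)) ^ (j₀ + (p-c) + (i₀ + b₂)) * (-1) ^ ((a+1) + (j₀+1)) = 1 := by
    rw [← pow_add, hpar, pow_mul]; norm_num
  have sE : ((-1 : ZMod p)) ^ (j₀ + (p-c) + (i₀ + b₂)) = (-1) ^ (a+1) * (-1) ^ (j₀+1) := by
    calc ((-1 : ZMod p)) ^ (j₀ + (p-c) + (i₀ + b₂))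
        = ((-1 : ZMod p)) ^ (j₀ + (p-c) + (i₀ + b₂))
            * ((-1) ^ ((a+1) + (j₀+1)) * (-1) ^ ((a+1) + (j₀+1))) := by rw [sq, mul_one]
      _ = (((-1 : ZMod p)) ^ (j₀ + (p-c) + (i₀ + b₂)) * (-1) ^ ((a+1) + (j₀+1)))
            * (-1) ^ ((a+1) + (j₀+1)) := by ring
      _ = (-1) ^ ((a+1) + (j₀+1)) := by rw [hone, one_mul]
      _ = (-1) ^ (a+1) * (-1) ^ (j₀+1) := pow_add _ _ _
  rw [sE, ← w1, ← w2, ← e1, ← e2]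
  field_simp

lemma tdX {R : Type*} [CommSemiring R] {σ : Type*} (i : σ) :
    totalDegree (X i : MvPolynomial σ R) ≤ 1 := by
  rw [X]
  exact (totalDegree_monomial_le _ _).trans (by simp)

lemma tdeg_le {p : ℕ} (a b₁ B b₂ : ℕ) :
    totalDegree ((X 0)^a * (1 - X 0)^b₁ * (X 1 - X 0)^B * (1 - X 1)^b₂ :
      MvPolynomial (Fin 2) (ZMod p)) ≤ a + b₁ + B + b₂ := by
  have e0 : totalDegree ((1 : MvPolynomial (Fin 2) (ZMod p)) - X 0) ≤ 1 :=
    (totalDegree_sub _ _).trans (max_le (by simp [totalDegree_one]) (tdX _))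
  have e1 : totalDegree ((1 : MvPolynomial (Fin 2) (ZMod p)) - X 1) ≤ 1 :=
    (totalDegree_sub _ _).trans (max_le (by simp [totalDegree_one]) (tdX _))
  have e2 : totalDegree ((X 1 : MvPolynomial (Fin 2) (ZMod p)) - X 0) ≤ 1 :=
    (totalDegree_sub _ _).trans (max_le (tdX _) (tdX _))
  have pow_le : ∀ (f : MvPolynomial (Fin 2) (ZMod p)) (n : ℕ), totalDegree f ≤ 1 →
      totalDegree (f ^ n) ≤ n := fun f n hf =>
    (totalDegree_pow _ _).trans (by calc n * totalDegree f ≤ n * 1 := Nat.mul_le_mul_left _ hf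
                                       _ = n := mul_one n)
  calc totalDegree ((X 0)^a * (1 - X 0)^b₁ * (X 1 - X 0)^B * (1 - X 1)^b₂ :
      MvPolynomial (Fin 2) (ZMod p))
      ≤ totalDegree ((X 0)^a * (1 - X 0)^b₁ * (X 1 - X 0)^B : MvPolynomial (Fin 2) (ZMod p))
        + totalDegree ((1 - X 1)^b₂ : MvPolynomial (Fin 2) (ZMod p)) := totalDegree_mul _ _
    _ ≤ (totalDegree ((X 0)^a * (1 - X 0)^b₁ : MvPolynomial (Fin 2) (ZMod p))
        + totalDegree ((X 1 - X 0)^B : MvPolynomial (Fin 2) (ZMod p)))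
        + totalDegree ((1 - X 1)^b₂ : MvPolynomial (Fin 2) (ZMod p)) :=
        Nat.add_le_add_right (totalDegree_mul _ _) _
    _ ≤ ((totalDegree ((X 0)^a : MvPolynomial (Fin 2) (ZMod p))
        + totalDegree ((1 - X 0)^b₁ : MvPolynomial (Fin 2) (ZMod p)))
        + totalDegree ((X 1 - X 0)^B : MvPolynomial (Fin 2) (ZMod p)))
        + totalDegree ((1 - X 1)^b₂ : MvPolynomial (Fin 2) (ZMod p)) :=
        Nat.add_le_add_right (Nat.add_le_add_right (totalDegree_mul _ _) _) _
    _ ≤ a + b₁ + B + b₂ :=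
        Nat.add_le_add (Nat.add_le_add (Nat.add_le_add (pow_le _ _ (tdX _)) (pow_le _ _ e0))
          (pow_le _ _ e2)) (pow_le _ _ e1)

lemma coeff_Xpow_mul_eq_zero {p : ℕ} {d : Fin 2 →₀ ℕ} {k : ℕ} (hk : d 0 < k)
    (g : MvPolynomial (Fin 2) (ZMod p)) : coeff d (X 0 ^ k * g) = 0 := by
  rw [coeff_mul]
  apply Finset.sum_eq_zero
  rintro ⟨u, v⟩ h
  rw [Finset.HasAntidiagonal.mem_antidiagonal] at h
  rw [X_pow_eq_monomial, coeff_monomial]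
  split_ifs with he
  · exfalso
    have := DFunLike.congr_fun h 0
    rw [← he] at this
    simp [Finsupp.single_apply] at this
    omega
  · exact zero_mul _

lemma key_lemma (p : ℕ) (hp : p.Prime) (hodd : Odd p) (b₁ : ℕ) :
    ∀ a b₂ c : ℕ, a < p → 0 < c → c ≤ p → b₂ < p →
    0 ≤ (b₂ : ℤ) - c + 1 → (b₂ : ℤ) - c + 1 < p →
    0 ≤ (b₁ : ℤ) + b₂ - c + 1 → (b₁ : ℤ) + b₂ - c + 1 < p →
    (p : ℤ) - 1 ≤ (a : ℤ) + b₁ + b₂ - c + 1 → (a : ℤ) + b₁ + b₂ - c + 1 < 2 * p - 1 →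
    MvPolynomial.coeff (Finsupp.single 0 (p - 1) + Finsupp.single 1 (p - 1))
      ((X 0) ^ a * (1 - X 0) ^ b₁ * (X 1 - X 0) ^ (p - c) * (1 - X 1) ^ b₂ :
        MvPolynomial (Fin 2) (ZMod p))
    = zfact p a * zfact p ((b₁ : ℤ) + b₂ - c + 1)
        * (zfact p ((a : ℤ) + b₁ + b₂ - c + 2 - p))⁻¹
        * (zfact p ((p : ℤ) - c) * zfact p b₂ * (zfact p ((b₂ : ℤ) - c + 1))⁻¹) := by
  haveI : Fact p.Prime := ⟨hp⟩
  have hp3 : 3 ≤ p := by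
    rcases hp.two_le.lt_or_eq with h | h
    · omega
    · exact absurd hodd (by rw [← h]; decide)
  induction b₁ with
  | zero =>
    intro a b₂ c ha hc hcp hb₂ h1 h1' h2 h2' h3 h3'
    rw [zfact_eq _ a (by omega), zfact_eq _ (b₂+1-c) (by push_cast; omega),
      zfact_eq _ (a+b₂+2-c-p) (by push_cast; omega), zfact_eq _ (p-c) (by omega),
      zfact_eq _ b₂ (by omega), zfact_eq _ (b₂+1-c) (by omega)]
    rw [pow_zero, mul_one]
    exact base_case hp hodd a b₂ c ha hc hcp hb₂ (by omega) (by omega) (by omega)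
      (by omega) (by omega)
  | succ b₁ ih =>
    intro a b₂ c ha hc hcp hb₂ h1 h1' h2 h2' h3 h3'
    have hpoly : ((X 0)^a * (1 - X 0)^(b₁+1) * (X 1 - X 0)^(p-c) * (1 - X 1)^b₂ :
        MvPolynomial (Fin 2) (ZMod p))
        = (X 0)^a * (1 - X 0)^b₁ * (X 1 - X 0)^(p-c) * (1 - X 1)^b₂
          - (X 0)^(a+1) * (1 - X 0)^b₁ * (X 1 - X 0)^(p-c) * (1 - X 1)^b₂ := by ring
    rw [hpoly, coeff_sub]
    rw [zfact_eq (a : ℤ) a (by omega),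
      zfact_eq (((b₁+1 : ℕ) : ℤ) + (b₂:ℤ) - (c:ℤ) + 1) (b₁+b₂+2-c) (by omega),
      zfact_eq ((a:ℤ) + ((b₁+1 : ℕ) : ℤ) + (b₂:ℤ) - (c:ℤ) + 2 - (p:ℤ)) (a+b₁+b₂+3-c-p)
        (by omega),
      zfact_eq ((p:ℤ) - (c:ℤ)) (p-c) (by omega),
      zfact_eq ((b₂:ℤ)) b₂ (by omega),
      zfact_eq ((b₂:ℤ) - (c:ℤ) + 1) (b₂+1-c) (by omega)]
    have hd0 : ((Finsupp.single (0:Fin 2) (p-1) + Finsupp.single 1 (p-1) : Fin 2 →₀ ℕ)) 0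
        = p - 1 := by simp [Finsupp.single_apply]
    by_cases hA : (a : ℤ) + b₁ + b₂ - c + 1 = p - 2
    -- Case A : the (a, b₁) term vanishes by degree reasons
    · have hzero : coeff (Finsupp.single 0 (p - 1) + Finsupp.single 1 (p - 1))
          ((X 0)^a * (1 - X 0)^b₁ * (X 1 - X 0)^(p-c) * (1 - X 1)^b₂ :
            MvPolynomial (Fin 2) (ZMod p)) = 0 := by
        apply coeff_eq_zero_of_totalDegree_lt
        have hsum : ∑ i ∈ (Finsupp.single (0:Fin 2) (p-1) + Finsupp.single 1 (p-1)).support,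
            ((Finsupp.single (0:Fin 2) (p-1) + Finsupp.single 1 (p-1) : Fin 2 →₀ ℕ)) i
            = 2 * (p-1) := by
          rw [Finset.sum_subset (Finset.subset_univ _)
            (fun x _ hx => Finsupp.notMem_support_iff.mp hx), Fin.sum_univ_two]
          have hd1 : ((Finsupp.single (0:Fin 2) (p-1) + Finsupp.single 1 (p-1) : Fin 2 →₀ ℕ)) 1
              = p - 1 := by simp [Finsupp.single_apply]
          omega
        rw [hsum]
        have := tdeg_le (p := p) a b₁ (p-c) b₂
        omega
      have ha1 : a + 1 < p := by omega
      rw [hzero, zero_sub]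
      rw [ih (a+1) b₂ c ha1 hc hcp hb₂ h1 h1' (by omega) (by omega) (by omega) (by omega)]
      rw [zfact_eq (((a+1:ℕ)) : ℤ) (a+1) (by omega),
        zfact_eq ((b₁:ℤ) + (b₂:ℤ) - (c:ℤ) + 1) (b₁+b₂+1-c) (by omega),
        zfact_eq (((a+1:ℕ):ℤ) + (b₁:ℤ) + (b₂:ℤ) - (c:ℤ) + 2 - (p:ℤ)) 0 (by omega),
        zfact_eq ((p:ℤ) - (c:ℤ)) (p-c) (by omega),
        zfact_eq ((b₂:ℤ)) b₂ (by omega),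
        zfact_eq ((b₂:ℤ) - (c:ℤ) + 1) (b₂+1-c) (by omega)]
      rw [show a+b₁+b₂+3-c-p = 0 from by omega]
      have hkey : (((b₁+b₂+1-c : ℕ) : ZMod p) + 1) + (((a : ℕ) : ZMod p) + 1) = 0 := by
        have he : ((b₁+b₂+1-c) + 1) + (a+1) = p := by omega
        have := congrArg (fun n : ℕ => (n : ZMod p)) he
        push_cast at this
        rw [ZMod.natCast_self] at this
        linear_combination this
      rw [show b₁+b₂+2-c = (b₁+b₂+1-c)+1 from by omega]
      simp only [Nat.factorial_succ, Nat.factorial_zero, inv_one]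
      push_cast
      linear_combination (-(((a).factorial : ZMod p) * (((b₁+b₂+1-c).factorial : ZMod p))
        * (((p-c).factorial : ZMod p) * ((b₂.factorial : ZMod p))
            * (((b₂+1-c).factorial : ZMod p))⁻¹))) * hkey
    · by_cases hB : a + 1 = p
      -- Case B : a = p - 1, the (a+1, b₁) term vanishes since X 0 power exceeds p-1
      · have hzero : coeff (Finsupp.single 0 (p - 1) + Finsupp.single 1 (p - 1))
            ((X 0)^(a+1) * (1 - X 0)^b₁ * (X 1 - X 0)^(p-c) * (1 - X 1)^b₂ :
              MvPolynomial (Fin 2) (ZMod p)) = 0 := by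
          rw [show ((X 0)^(a+1) * (1 - X 0)^b₁ * (X 1 - X 0)^(p-c) * (1 - X 1)^b₂ :
              MvPolynomial (Fin 2) (ZMod p))
              = (X 0)^(a+1) * ((1 - X 0)^b₁ * ((X 1 - X 0)^(p-c) * (1 - X 1)^b₂)) from by ring]
          exact coeff_Xpow_mul_eq_zero (by omega) _
        rw [hzero, sub_zero]
        rw [ih a b₂ c ha hc hcp hb₂ h1 h1' (by omega) (by omega) (by omega) (by omega)]
        rw [zfact_eq (a : ℤ) a (by omega),
          zfact_eq ((b₁:ℤ) + (b₂:ℤ) - (c:ℤ) + 1) (b₁+b₂+1-c) (by omega),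
          zfact_eq ((a:ℤ) + (b₁:ℤ) + (b₂:ℤ) - (c:ℤ) + 2 - (p:ℤ)) (b₁+b₂+1-c) (by omega),
          zfact_eq ((p:ℤ) - (c:ℤ)) (p-c) (by omega),
          zfact_eq ((b₂:ℤ)) b₂ (by omega),
          zfact_eq ((b₂:ℤ) - (c:ℤ) + 1) (b₂+1-c) (by omega)]
        rw [show a+b₁+b₂+3-c-p = b₁+b₂+2-c from by omega]
        have n1 : (((b₁+b₂+2-c).factorial : ZMod p)) ≠ 0 := fact_ne_zero hp (by omega)
        have n2 : (((b₁+b₂+1-c).factorial : ZMod p)) ≠ 0 := fact_ne_zero hp (by omega)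
        field_simp
      -- Case C : main case, both induction hypotheses apply
      · have ha1 : a + 1 < p := by omega
        rw [ih a b₂ c ha hc hcp hb₂ h1 h1' (by omega) (by omega) (by omega) (by omega),
          ih (a+1) b₂ c ha1 hc hcp hb₂ h1 h1' (by omega) (by omega) (by omega) (by omega)]
        rw [zfact_eq (a : ℤ) a (by omega),
          zfact_eq (((a+1:ℕ)) : ℤ) (a+1) (by omega),
          zfact_eq ((b₁:ℤ) + (b₂:ℤ) - (c:ℤ) + 1) (b₁+b₂+1-c) (by omega),
          zfact_eq ((a:ℤ) + (b₁:ℤ) + (b₂:ℤ) - (c:ℤ) + 2 - (p:ℤ)) (a+b₁+b₂+2-c-p) (by omega),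
          zfact_eq (((a+1:ℕ):ℤ) + (b₁:ℤ) + (b₂:ℤ) - (c:ℤ) + 2 - (p:ℤ)) (a+b₁+b₂+3-c-p)
            (by omega),
          zfact_eq ((p:ℤ) - (c:ℤ)) (p-c) (by omega),
          zfact_eq ((b₂:ℤ)) b₂ (by omega),
          zfact_eq ((b₂:ℤ) - (c:ℤ) + 1) (b₂+1-c) (by omega)]
        rw [show a+b₁+b₂+3-c-p = (a+b₁+b₂+2-c-p)+1 from by omega,
          show b₁+b₂+2-c = (b₁+b₂+1-c)+1 from by omega]
        simp only [Nat.factorial_succ]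
        have hkey : (((b₁+b₂+1-c : ℕ) : ZMod p) + 1) + (((a:ℕ) : ZMod p) + 1)
            = ((a+b₁+b₂+2-c-p : ℕ) : ZMod p) + 1 := by
          have he : ((b₁+b₂+1-c) + 1) + (a + 1) = ((a+b₁+b₂+2-c-p) + 1) + p := by omega
          have := congrArg (fun n : ℕ => (n : ZMod p)) he
          push_cast at this
          rw [ZMod.natCast_self] at this
          linear_combination this
        have n1 : (((a+b₁+b₂+2-c-p).factorial : ZMod p)) ≠ 0 := fact_ne_zero hp (by omega)
        have n2 : (((b₂+1-c).factorial : ZMod p)) ≠ 0 := fact_ne_zero hp (by omega)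
        have n3 : (((a+b₁+b₂+2-c-p : ℕ) : ZMod p) + 1) ≠ 0 := by
          intro hcon
          have h4 : (((a+b₁+b₂+2-c-p)+1 : ℕ) : ZMod p) = 0 := by push_cast; linear_combination hcon
          rw [ZMod.natCast_eq_zero_iff] at h4
          have hle := Nat.le_of_dvd (by omega) h4
          omega
        push_cast
        have hI : ((((a+b₁+b₂+2-c-p : ℕ) : ZMod p) + 1)
              * ((a+b₁+b₂+2-c-p).factorial : ZMod p))⁻¹
              * (((a+b₁+b₂+2-c-p : ℕ) : ZMod p) + 1)
            = (((a+b₁+b₂+2-c-p).factorial : ZMod p))⁻¹ := by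
          rw [mul_inv, mul_comm ((((a+b₁+b₂+2-c-p : ℕ) : ZMod p) + 1))⁻¹
            ((((a+b₁+b₂+2-c-p).factorial : ZMod p))⁻¹), mul_assoc, inv_mul_cancel₀ n3, mul_one]
        linear_combination (-((a.factorial : ZMod p) * ((b₁+b₂+1-c).factorial : ZMod p)
            * (((p-c).factorial : ZMod p) * (b₂.factorial : ZMod p)
              * (((b₂+1-c).factorial : ZMod p))⁻¹)
            * ((((a+b₁+b₂+2-c-p : ℕ) : ZMod p) + 1)
              * ((a+b₁+b₂+2-c-p).factorial : ZMod p))⁻¹)) * hkey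
          + (-((a.factorial : ZMod p) * ((b₁+b₂+1-c).factorial : ZMod p)
            * (((p-c).factorial : ZMod p) * (b₂.factorial : ZMod p)
              * (((b₂+1-c).factorial : ZMod p))⁻¹))) * hI

/-- **The simplest `A₂`-type `𝔽_p`-Selberg formula (`k₁ = k₂ = 1`).** The
coefficient of `t^{p-1} s^{p-1}` in `t^a (1-t)^{b₁} (s-t)^{p-c} (1-s)^{b₂}` equals
`a! (b₁+b₂-c+1)! (p-c)! b₂! / ((a+b₁+b₂-c+2-p)! (b₂-c+1)!)` in `ZMod p`. -/
theorem fp_selberg_A2_simplest (p : ℕ) (hp : p.Prime) (hodd : Odd p)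
    (a b₁ b₂ c : ℕ) (ha : a < p) (hc : 0 < c) (hcp : c ≤ p) (hb₂ : b₂ < p)
    (h1 : 0 ≤ (b₂ : ℤ) - c + 1) (h1' : (b₂ : ℤ) - c + 1 < p)
    (h2 : 0 ≤ (b₁ : ℤ) + b₂ - c + 1) (h2' : (b₁ : ℤ) + b₂ - c + 1 < p)
    (h3 : (p : ℤ) - 1 ≤ (a : ℤ) + b₁ + b₂ - c + 1)
    (h3' : (a : ℤ) + b₁ + b₂ - c + 1 < 2 * p - 1) :
    MvPolynomial.coeff (Finsupp.single 0 (p - 1) + Finsupp.single 1 (p - 1))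
      ((X 0) ^ a * (1 - X 0) ^ b₁ * (X 1 - X 0) ^ (p - c) * (1 - X 1) ^ b₂ :
        MvPolynomial (Fin 2) (ZMod p))
    = zfact p a * zfact p ((b₁ : ℤ) + b₂ - c + 1)
        * (zfact p ((a : ℤ) + b₁ + b₂ - c + 2 - p))⁻¹
        * (zfact p ((p : ℤ) - c) * zfact p b₂ * (zfact p ((b₂ : ℤ) - c + 1))⁻¹) := by
  exact key_lemma p hp hodd b₁ a b₂ c ha hc hcp hb₂ h1 h1' h2 h2' h3 h3'
end

section
/- Difference equation in b_1 for R: let p be an odd prime, k_1 > k_2 > 0 integers, b_1 > 1, and assume that both (a, b_1−1, b_2, c) and (a, b_1, b_2, c) are admissible for (k_1, k_2). Then in F_p one has R_{k_1,k_2}(a,b_1−1,b_2,c) = R_{k_1,k_2}(a,b_1,b_2,c) · ∏_{i=1}^{k_1−k_2} (1+a+b_1+(i+k_1−2)c−p)·(b_1+(i−1)c)^{−1} · ∏_{i=1}^{k_2} (2+a+b_1+b_2+(i+k_1−3)c−p)·(1+b_1+b_2+(i−2)c)^{−1}, where the displayed integers are reduced mod p (the inverted factors lie in [1, p−1] by the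 admissibility assumptions and hence are nonzero in F_p). -/
open Finset MvPolynomial

/-- The `A₂` master polynomial `Φ(t;s)` over `ZMod p`, in the variables
`t_i = X (Sum.inl i)` (`1 ≤ i ≤ k₁`) and `s_j = X (Sum.inr j)` (`1 ≤ j ≤ k₂`). -/
noncomputable def phi2 (p k₁ k₂ a b₁ b₂ c : ℕ) :
    MvPolynomial (Fin k₁ ⊕ Fin k₂) (ZMod p) :=
  (∏ i : Fin k₁, X (Sum.inl i) ^ a * (1 - X (Sum.inl i)) ^ b₁)
  * (∏ j : Fin k₂, (1 - X (Sum.inr j)) ^ b₂)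
  * (∏ i : Fin k₁, ∏ j : Fin k₂, (X (Sum.inr j) - X (Sum.inl i)) ^ (p - c))
  * (∏ i : Fin k₁, ∏ i' : Fin k₁,
      if i < i' then (X (Sum.inl i) - X (Sum.inl i')) ^ (2 * c) else 1)
  * (∏ j : Fin k₂, ∏ j' : Fin k₂,
      if j < j' then (X (Sum.inr j) - X (Sum.inr j')) ^ (2 * c) else 1)

/-- The `A₂`-type `𝔽_p`-Selberg integral `S_{k₁,k₂}(a,b₁,b₂,c)`: the coefficient of
`∏_i t_i^{p-1} ∏_j s_j^{k₁p-1}` in the master polynomial `Φ`. -/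
noncomputable def selbergS2 (p k₁ k₂ a b₁ b₂ c : ℕ) : ZMod p :=
  MvPolynomial.coeff
    ((∑ i : Fin k₁, Finsupp.single (Sum.inl i) (p - 1))
      + ∑ j : Fin k₂, Finsupp.single (Sum.inr j) (k₁ * p - 1))
    (phi2 p k₁ k₂ a b₁ b₂ c)

/-- The right-hand side `R_{k₁,k₂}(a,b₁,b₂,c)` of the `A₂`-type `𝔽_p`-Selberg
integral formula. -/
noncomputable def selbergR2 (p k₁ k₂ a b₁ b₂ c : ℕ) : ZMod p :=
  (-1) ^ (k₁ + k₂)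
  * (∏ i ∈ Icc 1 (k₁ - k₂),
      zfact p ((b₁ : ℤ) + ((i : ℤ) - 1) * c)
        * (zfact p (1 + (a : ℤ) + b₁ + ((i : ℤ) + k₁ - 2) * c - p))⁻¹)
  * (∏ i ∈ Icc 1 k₂,
      (zfact p ((b₂ : ℤ) + ((i : ℤ) - 1) * c)
        * (zfact p (1 + (b₂ : ℤ) + ((i : ℤ) + k₂ - k₁ - 2) * c))⁻¹)
      * (zfact p (1 + (b₁ : ℤ) + b₂ + ((i : ℤ) - 2) * c)
        * (zfact p (2 + (a : ℤ) + b₁ + b₂ + ((i : ℤ) + k₁ - 3) * c - p))⁻¹))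
  * (∏ i ∈ Icc 1 k₁, zfact p ((a : ℤ) + ((i : ℤ) - 1) * c))
  * (∏ i ∈ Icc 1 k₂, zfact p ((p : ℤ) + ((i : ℤ) - (k₁ : ℤ) - 1) * c))
  * (∏ i ∈ Icc 1 k₁, zfact p ((i : ℤ) * c) * (zfact p (c : ℤ))⁻¹)
  * (∏ i ∈ Icc 1 k₂, zfact p ((i : ℤ) * c) * (zfact p (c : ℤ))⁻¹)

/-- Admissibility of the quadruple of positive integers `(a, b₁, b₂, c)` for
`(k₁, k₂)`: `a+(k₁−1)c < p−1` and every integer whose factorial appears in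
`selbergR2` lies in `[0, p-1]`. -/
def adm2 (p k₁ k₂ a b₁ b₂ c : ℕ) : Prop :=
  0 < a ∧ 0 < b₁ ∧ 0 < b₂ ∧ 0 < c ∧
  (a : ℤ) + ((k₁ : ℤ) - 1) * c < (p : ℤ) - 1 ∧
  (∀ i, 1 ≤ i → i ≤ k₁ - k₂ →
    (0 ≤ (b₁ : ℤ) + ((i : ℤ) - 1) * c ∧ (b₁ : ℤ) + ((i : ℤ) - 1) * c ≤ (p : ℤ) - 1) ∧
    (0 ≤ 1 + (a : ℤ) + b₁ + ((i : ℤ) + k₁ - 2) * c - p ∧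
      1 + (a : ℤ) + b₁ + ((i : ℤ) + k₁ - 2) * c - p ≤ (p : ℤ) - 1)) ∧
  (∀ i, 1 ≤ i → i ≤ k₂ →
    (0 ≤ (b₂ : ℤ) + ((i : ℤ) - 1) * c ∧ (b₂ : ℤ) + ((i : ℤ) - 1) * c ≤ (p : ℤ) - 1) ∧
    (0 ≤ 1 + (b₂ : ℤ) + ((i : ℤ) + k₂ - k₁ - 2) * c ∧
      1 + (b₂ : ℤ) + ((i : ℤ) + k₂ - k₁ - 2) * c ≤ (p : ℤ) - 1) ∧
    (0 ≤ 1 + (b₁ : ℤ) + b₂ + ((i : ℤ) - 2) * c ∧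
      1 + (b₁ : ℤ) + b₂ + ((i : ℤ) - 2) * c ≤ (p : ℤ) - 1) ∧
    (0 ≤ 2 + (a : ℤ) + b₁ + b₂ + ((i : ℤ) + k₁ - 3) * c - p ∧
      2 + (a : ℤ) + b₁ + b₂ + ((i : ℤ) + k₁ - 3) * c - p ≤ (p : ℤ) - 1)) ∧
  (∀ i, 1 ≤ i → i ≤ k₁ →
    (0 ≤ (a : ℤ) + ((i : ℤ) - 1) * c ∧ (a : ℤ) + ((i : ℤ) - 1) * c ≤ (p : ℤ) - 1) ∧
    (0 ≤ (i : ℤ) * c ∧ (i : ℤ) * c ≤ (p : ℤ) - 1)) ∧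
  (∀ i, 1 ≤ i → i ≤ k₂ →
    0 ≤ (p : ℤ) + ((i : ℤ) - (k₁ : ℤ) - 1) * c ∧
    (p : ℤ) + ((i : ℤ) - (k₁ : ℤ) - 1) * c ≤ (p : ℤ) - 1)

lemma zfact_shift (p : ℕ) (x : ℤ) (hx : 1 ≤ x) :
    zfact p x = (x : ZMod p) * zfact p (x - 1) := by
  unfold zfact
  have h1 : x.toNat = (x - 1).toNat + 1 := by omega
  rw [h1, Nat.factorial_succ, Nat.cast_mul]
  congr 1
  have h2 : (((x - 1).toNat + 1 : ℕ) : ℤ) = x := by omega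
  calc (((x - 1).toNat + 1 : ℕ) : ZMod p)
      = ((((x - 1).toNat + 1 : ℕ) : ℤ) : ZMod p) := by push_cast; ring
    _ = (x : ZMod p) := by rw [h2]

lemma intcast_ne_zero' (p : ℕ) (hp : p.Prime) (x : ℤ) (h1 : 1 ≤ x)
    (h2 : x ≤ (p : ℤ) - 1) : (x : ZMod p) ≠ 0 := by
  haveI := Fact.mk hp
  rw [Ne, ZMod.intCast_zmod_eq_zero_iff_dvd]
  intro hdvd
  have := Int.le_of_dvd (by omega) hdvd
  omega

lemma zfact_pred (p : ℕ) (hp : p.Prime) (x : ℤ) (h1 : 1 ≤ x) (h2 : x ≤ (p : ℤ) - 1) :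
    zfact p (x - 1) = (x : ZMod p)⁻¹ * zfact p x := by
  haveI := Fact.mk hp
  rw [zfact_shift p x h1, ← mul_assoc,
    inv_mul_cancel₀ (intcast_ne_zero' p hp x h1 h2), one_mul]

lemma mul_rearrange {α : Type*} [CommRing α] (z P1 P2 F1 F2 s4 s5 s6 s7 Q1 Q2 : α)
    (h1 : Q1 = P1 * F1) (h2 : Q2 = P2 * F2) :
    z * Q1 * Q2 * s4 * s5 * s6 * s7
      = z * P1 * P2 * s4 * s5 * s6 * s7 * F1 * F2 := by
  subst h1 h2; ring

lemma zfact_pred_inv (p : ℕ) (hp : p.Prime) (x : ℤ) (h1 : 1 ≤ x) (h2 : x ≤ (p : ℤ) - 1) :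
    (zfact p (x - 1))⁻¹ = (x : ZMod p) * (zfact p x)⁻¹ := by
  haveI := Fact.mk hp
  rw [zfact_shift p x h1, mul_inv, ← mul_assoc,
    mul_inv_cancel₀ (intcast_ne_zero' p hp x h1 h2), one_mul]

/-- **Difference equation in `b₁` for `R_{k₁,k₂}`.** -/
theorem fp_selberg_A2_R_difference_b1 (p k₁ k₂ a b₁ b₂ c : ℕ)
    (hp : p.Prime) (hodd : Odd p) (hk2 : 0 < k₂) (hk12 : k₂ < k₁) (hb₁ : 1 < b₁)
    (hadm' : adm2 p k₁ k₂ a (b₁ - 1) b₂ c) (hadm : adm2 p k₁ k₂ a b₁ b₂ c) :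
    selbergR2 p k₁ k₂ a (b₁ - 1) b₂ c
      = selbergR2 p k₁ k₂ a b₁ b₂ c
        * (∏ i ∈ Finset.Icc 1 (k₁ - k₂),
            ((1 + (a : ℤ) + b₁ + ((i : ℤ) + k₁ - 2) * c - p : ℤ) : ZMod p)
            * (((b₁ : ℤ) + ((i : ℤ) - 1) * c : ℤ) : ZMod p)⁻¹)
        * (∏ i ∈ Finset.Icc 1 k₂,
            ((2 + (a : ℤ) + b₁ + b₂ + ((i : ℤ) + k₁ - 3) * c - p : ℤ) : ZMod p)
            * ((1 + (b₁ : ℤ) + b₂ + ((i : ℤ) - 2) * c : ℤ) : ZMod p)⁻¹) := by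
  haveI := Fact.mk hp
  obtain ⟨-, -, -, -, -, H1, H2, -, -⟩ := hadm
  obtain ⟨-, -, -, -, -, H1', H2', -, -⟩ := hadm'
  have hcast : ((b₁ - 1 : ℕ) : ℤ) = (b₁ : ℤ) - 1 := by omega
  simp only [hcast] at H1' H2'
  unfold selbergR2
  simp only [hcast]
  have e1 : ∀ i ∈ Icc 1 (k₁ - k₂),
      zfact p ((b₁ : ℤ) - 1 + ((i : ℤ) - 1) * c)
        * (zfact p (1 + (a : ℤ) + ((b₁ : ℤ) - 1) + ((i : ℤ) + k₁ - 2) * c - p))⁻¹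
      = (zfact p ((b₁ : ℤ) + ((i : ℤ) - 1) * c)
          * (zfact p (1 + (a : ℤ) + b₁ + ((i : ℤ) + k₁ - 2) * c - p))⁻¹)
        * (((1 + (a : ℤ) + b₁ + ((i : ℤ) + k₁ - 2) * c - p : ℤ) : ZMod p)
          * (((b₁ : ℤ) + ((i : ℤ) - 1) * c : ℤ) : ZMod p)⁻¹) := by
    intro i hi
    simp only [Finset.mem_Icc] at hi
    obtain ⟨⟨hX0, hXp⟩, hY0, hYp⟩ := H1 i hi.1 hi.2
    obtain ⟨⟨hX0', -⟩, hY0', -⟩ := H1' i hi.1 hi.2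
    have hXarg : (b₁ : ℤ) - 1 + ((i : ℤ) - 1) * c
        = ((b₁ : ℤ) + ((i : ℤ) - 1) * c) - 1 := by ring
    have hYarg : 1 + (a : ℤ) + ((b₁ : ℤ) - 1) + ((i : ℤ) + k₁ - 2) * c - p
        = (1 + (a : ℤ) + b₁ + ((i : ℤ) + k₁ - 2) * c - p) - 1 := by ring
    rw [hXarg, hYarg, zfact_pred p hp _ (by linarith) hXp,
      zfact_pred_inv p hp _ (by linarith) hYp]
    ring
  have e2 : ∀ i ∈ Icc 1 k₂,
      (zfact p ((b₂ : ℤ) + ((i : ℤ) - 1) * c)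
        * (zfact p (1 + (b₂ : ℤ) + ((i : ℤ) + k₂ - k₁ - 2) * c))⁻¹)
      * (zfact p (1 + ((b₁ : ℤ) - 1) + b₂ + ((i : ℤ) - 2) * c)
        * (zfact p (2 + (a : ℤ) + ((b₁ : ℤ) - 1) + b₂ + ((i : ℤ) + k₁ - 3) * c - p))⁻¹)
      = ((zfact p ((b₂ : ℤ) + ((i : ℤ) - 1) * c)
          * (zfact p (1 + (b₂ : ℤ) + ((i : ℤ) + k₂ - k₁ - 2) * c))⁻¹)
        * (zfact p (1 + (b₁ : ℤ) + b₂ + ((i : ℤ) - 2) * c)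
          * (zfact p (2 + (a : ℤ) + b₁ + b₂ + ((i : ℤ) + k₁ - 3) * c - p))⁻¹))
        * (((2 + (a : ℤ) + b₁ + b₂ + ((i : ℤ) + k₁ - 3) * c - p : ℤ) : ZMod p)
          * ((1 + (b₁ : ℤ) + b₂ + ((i : ℤ) - 2) * c : ℤ) : ZMod p)⁻¹) := by
    intro i hi
    simp only [Finset.mem_Icc] at hi
    obtain ⟨-, -, ⟨hU0, hUp⟩, hV0, hVp⟩ := H2 i hi.1 hi.2
    obtain ⟨-, -, ⟨hU0', -⟩, hV0', -⟩ := H2' i hi.1 hi.2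
    have hUarg : 1 + ((b₁ : ℤ) - 1) + b₂ + ((i : ℤ) - 2) * c
        = (1 + (b₁ : ℤ) + b₂ + ((i : ℤ) - 2) * c) - 1 := by ring
    have hVarg : 2 + (a : ℤ) + ((b₁ : ℤ) - 1) + b₂ + ((i : ℤ) + k₁ - 3) * c - p
        = (2 + (a : ℤ) + b₁ + b₂ + ((i : ℤ) + k₁ - 3) * c - p) - 1 := by ring
    rw [hUarg, hVarg, zfact_pred p hp _ (by linarith) hUp,
      zfact_pred_inv p hp _ (by linarith) hVp]
    ring
  exact mul_rearrange _ _ _ _ _ _ _ _ _ _ _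
    ((Finset.prod_congr rfl e1).trans Finset.prod_mul_distrib)
    ((Finset.prod_congr rfl e2).trans Finset.prod_mul_distrib)
end

section
/- Let p be an odd prime, k_1 > k_2 > 0 integers, and a, c positive integers with k_1·c ≤ p−1 and a+(k_1−1)c < p−1. Then the quadruple (a, p−1−(a+(k_1−1)c), (k_1−k_2+1)c−1, c) is admissible for (k_1, k_2). -/
open Finset MvPolynomial

/-- For positive integers `a, c` with `k₁c ≤ p−1` and `a+(k₁−1)c < p−1`, the
quadruple `(a, p−1−(a+(k₁−1)c), (k₁−k₂+1)c−1, c)` is admissible for `(k₁,k₂)`. -/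
theorem fp_selberg_A2_special_point_admissible (p k₁ k₂ a c : ℕ)
    (hp : p.Prime) (hodd : Odd p) (hk2 : 0 < k₂) (hk12 : k₂ < k₁)
    (ha : 0 < a) (hc : 0 < c)
    (h1 : k₁ * c ≤ p - 1) (h2 : a + (k₁ - 1) * c < p - 1) :
    adm2 p k₁ k₂ a (p - 1 - (a + (k₁ - 1) * c)) ((k₁ - k₂ + 1) * c - 1) c := by
  have hp3 : 3 ≤ p := by
    rcases hodd with ⟨m, hm⟩
    have := hp.two_le
    omega
  have hk1 : 1 ≤ k₁ := by omega
  have hcz : (0:ℤ) ≤ (c:ℤ) := by positivity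
  have hc1 : (1:ℤ) ≤ (c:ℤ) := by exact_mod_cast hc
  have hkc : (k₁:ℤ) * c ≤ (p:ℤ) - 1 := by
    have := (Nat.cast_le (α := ℤ)).2 h1
    push_cast [Nat.cast_sub (show 1 ≤ p by omega)] at this
    linarith
  have h2' : (a:ℤ) + ((k₁:ℤ) - 1) * c < (p:ℤ) - 1 := by
    have := (Nat.cast_lt (α := ℤ)).2 h2
    push_cast [Nat.cast_sub (show 1 ≤ p by omega), Nat.cast_sub hk1] at this
    linarith
  have hb2pos : 1 ≤ (k₁ - k₂ + 1) * c := by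
    have : 1 * 1 ≤ (k₁ - k₂ + 1) * c := Nat.mul_le_mul (by omega) hc
    omega
  have hb1 : ((p - 1 - (a + (k₁ - 1) * c) : ℕ) : ℤ)
      = (p:ℤ) - 1 - ((a:ℤ) + ((k₁:ℤ) - 1) * c) := by
    have hle : a + (k₁ - 1) * c ≤ p - 1 := h2.le
    push_cast [Nat.cast_sub hle, Nat.cast_sub (show 1 ≤ p by omega), Nat.cast_sub hk1]
    ring
  have hb2 : (((k₁ - k₂ + 1) * c - 1 : ℕ) : ℤ) = ((k₁:ℤ) - (k₂:ℤ) + 1) * c - 1 := by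
    push_cast [Nat.cast_sub hb2pos, Nat.cast_sub hk12.le]
    ring
  have haz : (0:ℤ) ≤ (a:ℤ) := by positivity
  have hk2c : (c:ℤ) ≤ (k₂:ℤ) * c := by
    have h := mul_le_mul_of_nonneg_right (show (1:ℤ) ≤ (k₂:ℤ) by exact_mod_cast hk2) hcz
    linarith
  have hkk : (k₂:ℤ) * c ≤ (k₁:ℤ) * c :=
    mul_le_mul_of_nonneg_right (by exact_mod_cast hk12.le) hcz
  refine ⟨ha, ?_, ?_, hc, h2', ?_, ?_, ?_, ?_⟩
  · omega
  · have : 2 * 1 ≤ (k₁ - k₂ + 1) * c := Nat.mul_le_mul (by omega) hc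
    omega
  · intro i hi1 hi2
    have hic1 : (c:ℤ) ≤ (i:ℤ) * c := by
      have h := mul_le_mul_of_nonneg_right (show (1:ℤ) ≤ (i:ℤ) by exact_mod_cast hi1) hcz
      linarith
    have hic2 : (i:ℤ) * c ≤ ((k₁:ℤ) - (k₂:ℤ)) * c := by
      have : (i:ℤ) ≤ (k₁:ℤ) - (k₂:ℤ) := by
        have := (Nat.cast_le (α := ℤ)).2 hi2
        push_cast [Nat.cast_sub hk12.le] at this
        linarith
      exact mul_le_mul_of_nonneg_right this hcz
    simp only [hb1, hb2]
    refine ⟨⟨by linarith, by linarith⟩, ⟨by linarith, by linarith⟩⟩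
  · intro i hi1 hi2
    have hic1 : (c:ℤ) ≤ (i:ℤ) * c := by
      have h := mul_le_mul_of_nonneg_right (show (1:ℤ) ≤ (i:ℤ) by exact_mod_cast hi1) hcz
      linarith
    have hic2 : (i:ℤ) * c ≤ (k₂:ℤ) * c :=
      mul_le_mul_of_nonneg_right (by exact_mod_cast hi2) hcz
    simp only [hb1, hb2]
    refine ⟨⟨by linarith, by linarith⟩, ⟨by linarith, by linarith⟩,
      ⟨by linarith, by linarith⟩, ⟨by linarith, by linarith⟩⟩
  · intro i hi1 hi2
    have hic1 : (c:ℤ) ≤ (i:ℤ) * c := by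
      have h := mul_le_mul_of_nonneg_right (show (1:ℤ) ≤ (i:ℤ) by exact_mod_cast hi1) hcz
      linarith
    have hic2 : (i:ℤ) * c ≤ (k₁:ℤ) * c :=
      mul_le_mul_of_nonneg_right (by exact_mod_cast hi2) hcz
    refine ⟨⟨by linarith, by linarith⟩, ⟨by linarith, by linarith⟩⟩
  · intro i hi1 hi2
    have hic1 : (c:ℤ) ≤ (i:ℤ) * c := by
      have h := mul_le_mul_of_nonneg_right (show (1:ℤ) ≤ (i:ℤ) by exact_mod_cast hi1) hcz
      linarith
    have hic2 : (i:ℤ) * c ≤ (k₂:ℤ) * c :=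
      mul_le_mul_of_nonneg_right (by exact_mod_cast hi2) hcz
    constructor
    · linarith
    · linarith
end

section
/- Connectivity of the admissible set by unit decrements: let p be an odd prime, k_1 > k_2 > 0 integers, and let (a, b_1, b_2, c) be admissible for (k_1, k_2). Then there is a finite sequence of pairs of positive integers starting at (b_1, b_2) and ending at (p−1−(a+(k_1−1)c), (k_1−k_2+1)c−1) such that for every pair (β_1, β_2) in the sequence the quadruple (a, β_1, β_2, c) is admissible for (k_1, k_2), and each consecutive step either decreases β_1 by 1 or decreases β_2 by 1. -/
open Finset MvPolynomial

lemma adm2_mono (p k₁ k₂ a b₁ b₂ c : ℕ) (hk2 : 0 < k₂) (hk12 : k₂ < k₁)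
    (h : adm2 p k₁ k₂ a b₁ b₂ c) (β₁ β₂ : ℕ)
    (h1 : (p:ℤ) - 1 - a - ((k₁:ℤ) - 1) * c ≤ (β₁:ℤ)) (h1' : β₁ ≤ b₁)
    (h2 : ((k₁:ℤ) - k₂ + 1) * c - 1 ≤ (β₂:ℤ)) (h2' : β₂ ≤ b₂) :
    adm2 p k₁ k₂ a β₁ β₂ c := by
  obtain ⟨ha, hb1, hb2, hc, hlt, H1, H2, H3, H4⟩ := h
  have hc1 : (1:ℤ) ≤ c := by exact_mod_cast hc
  have hk : (k₂:ℤ) + 1 ≤ k₁ := by exact_mod_cast hk12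
  have hk2' : (1:ℤ) ≤ k₂ := by exact_mod_cast hk2
  have hb1' : (β₁:ℤ) ≤ b₁ := by exact_mod_cast h1'
  have hb2' : (β₂:ℤ) ≤ b₂ := by exact_mod_cast h2'
  have hpos1 : (0:ℤ) < β₁ := by linarith
  have h2c : (2:ℤ) * c ≤ ((k₁:ℤ) - k₂ + 1) * c :=
    mul_le_mul_of_nonneg_right (by linarith) (by linarith)
  have hpos2 : (0:ℤ) < β₂ := by linarith
  refine ⟨ha, by exact_mod_cast hpos1, by exact_mod_cast hpos2, hc, hlt, ?_, ?_, H3, H4⟩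
  · intro i hi1 hi2
    obtain ⟨⟨u1, u2⟩, v1, v2⟩ := H1 i hi1 hi2
    have hi : (1:ℤ) ≤ i := by exact_mod_cast hi1
    have nn1 : (0:ℤ) ≤ ((i:ℤ) - 1) * c := mul_nonneg (by linarith) (by linarith)
    have e1 : ((i:ℤ) + k₁ - 2) * c = ((k₁:ℤ) - 1) * c + ((i:ℤ) - 1) * c := by ring
    exact ⟨⟨by linarith, by linarith⟩, by linarith, by linarith⟩
  · intro i hi1 hi2
    obtain ⟨⟨u1, u2⟩, ⟨v1, v2⟩, ⟨w1, w2⟩, x1, x2⟩ := H2 i hi1 hi2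
    have hi : (1:ℤ) ≤ i := by exact_mod_cast hi1
    have nn1 : (0:ℤ) ≤ ((i:ℤ) - 1) * c := mul_nonneg (by linarith) (by linarith)
    have nn2 : (0:ℤ) ≤ ((k₁:ℤ) - k₂) * c := mul_nonneg (by linarith) (by linarith)
    have nn3 : (0:ℤ) ≤ ((i:ℤ) + k₁ - k₂ - 1) * c := mul_nonneg (by linarith) (by linarith)
    have e1 : ((i:ℤ) + k₂ - k₁ - 2) * c
        = -(((k₁:ℤ) - k₂ + 1) * c) + ((i:ℤ) - 1) * c := by ring
    have e2 : ((i:ℤ) - 2) * c = -(c:ℤ) + ((i:ℤ) - 1) * c := by ring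
    have e3 : ((k₁:ℤ) - k₂ + 1) * c = (c:ℤ) + ((k₁:ℤ) - k₂) * c := by ring
    have e4 : ((i:ℤ) + k₁ - 3) * c
        = ((k₁:ℤ) - 1) * c - ((k₁:ℤ) - k₂ + 1) * c + ((i:ℤ) + k₁ - k₂ - 1) * c := by ring
    exact ⟨⟨by linarith, by linarith⟩, ⟨by linarith, by linarith⟩,
      ⟨by linarith, by linarith⟩, by linarith, by linarith⟩

/-- **Connectivity of the admissible set by unit decrements.** Any admissible
`(a, b₁, b₂, c)` can be connected to the distinguished admissible point
`(a, p−1−(a+(k₁−1)c), (k₁−k₂+1)c−1, c)` by a finite sequence of steps, each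
decreasing `b₁` or `b₂` by `1`, staying admissible throughout. -/
theorem fp_selberg_A2_admissible_connected (p k₁ k₂ a b₁ b₂ c : ℕ)
    (hp : p.Prime) (hodd : Odd p) (hk2 : 0 < k₂) (hk12 : k₂ < k₁)
    (hadm : adm2 p k₁ k₂ a b₁ b₂ c) :
    ∃ (m : ℕ) (f : ℕ → ℕ × ℕ),
      f 0 = (b₁, b₂) ∧
      f m = (p - 1 - (a + (k₁ - 1) * c), (k₁ - k₂ + 1) * c - 1) ∧
      (∀ j ≤ m, adm2 p k₁ k₂ a (f j).1 (f j).2 c) ∧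
      (∀ j < m, f (j + 1) = ((f j).1 - 1, (f j).2) ∨
                f (j + 1) = ((f j).1, (f j).2 - 1)) := by
  obtain ⟨ha, hb1, hb2, hc, hlt, H1, H2, H3, H4⟩ := hadm
  have hadm' : adm2 p k₁ k₂ a b₁ b₂ c := ⟨ha, hb1, hb2, hc, hlt, H1, H2, H3, H4⟩
  have hk1 : 1 ≤ k₁ := by omega
  have hk21 : k₂ ≤ k₁ := by omega
  set B₁ : ℕ := p - 1 - (a + (k₁ - 1) * c) with hB₁def
  set B₂ : ℕ := (k₁ - k₂ + 1) * c - 1 with hB₂def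
  have he1 : (((k₁ - 1) * c : ℕ) : ℤ) = ((k₁:ℤ) - 1) * c := by
    push_cast [Nat.cast_sub hk1]; ring
  have he2 : (((k₁ - k₂ + 1) * c : ℕ) : ℤ) = ((k₁:ℤ) - k₂ + 1) * c := by
    push_cast [Nat.cast_sub hk21]; ring
  have hae : (a:ℤ) + (((k₁ - 1) * c : ℕ) : ℤ) < (p:ℤ) - 1 := by rw [he1]; linarith
  have hB1z : (B₁:ℤ) = (p:ℤ) - 1 - a - ((k₁:ℤ) - 1) * c := by
    rw [← he1, hB₁def]; omega
  have hc1 : 1 ≤ (k₁ - k₂ + 1) * c := by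
    have : 1 * 1 ≤ (k₁ - k₂ + 1) * c := Nat.mul_le_mul (by omega) hc
    omega
  have hB2z : (B₂:ℤ) = ((k₁:ℤ) - k₂ + 1) * c - 1 := by
    rw [← he2, hB₂def]; omega
  -- B₁ ≤ b₁
  have hB1b : B₁ ≤ b₁ := by
    obtain ⟨-, v1, -⟩ := H1 1 le_rfl (by omega)
    have e : (((1:ℕ):ℤ) + k₁ - 2) * c = ((k₁:ℤ) - 1) * c := by push_cast; ring
    have : (B₁:ℤ) ≤ b₁ := by rw [hB1z]; linarith
    exact_mod_cast this
  have hB2b : B₂ ≤ b₂ := by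
    obtain ⟨-, ⟨v1, -⟩, -⟩ := H2 1 le_rfl hk2
    have e : (((1:ℕ):ℤ) + k₂ - k₁ - 2) * c = -(((k₁:ℤ) - k₂ + 1) * c) := by push_cast; ring
    have : (B₂:ℤ) ≤ b₂ := by rw [hB2z]; linarith
    exact_mod_cast this
  set d₁ : ℕ := b₁ - B₁ with hd₁
  set d₂ : ℕ := b₂ - B₂ with hd₂
  refine ⟨d₁ + d₂, fun j => (b₁ - min j d₁, b₂ - (j - d₁)), by simp, ?_, ?_, ?_⟩
  · simp only [Prod.mk.injEq]
    constructor <;> [skip; skip] <;> omega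
  · intro j hj
    apply adm2_mono p k₁ k₂ a b₁ b₂ c hk2 hk12 hadm'
    · rw [← hB1z]
      have : B₁ ≤ b₁ - min j d₁ := by omega
      exact_mod_cast this
    · show b₁ - min j d₁ ≤ b₁
      omega
    · rw [← hB2z]
      have : B₂ ≤ b₂ - (j - d₁) := by omega
      exact_mod_cast this
    · show b₂ - (j - d₁) ≤ b₂
      omega
  · intro j hj
    rcases lt_or_ge j d₁ with h | h
    · left
      simp only [Prod.mk.injEq]
      constructor <;> omega
    · right
      simp only [Prod.mk.injEq]
      constructor <;> omega
end
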